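/- Let k ≥ 0 be an integer, let 1 < p < ∞, and fix ε with 0 < ε < 1. Then ∫_{|ω|<ε} |ω|^{−pk} F_m(ω)^{p/2} dω → 0 as m → ∞. In other words, condition (i) of the limit lemma holds for the orthogonal Daubechies wavelets: ∫_{|ω|<ε} |ω|^{−pk} |(ψ_m^D)^∧(ω)|^p dω → 0 as m → ∞. -/

import Mathlib

open MeasureTheory Filter
open scoped Topology

/-- `c_m = (∫_0^π sin^{2m-1} u du)⁻¹`. -/
noncomputable def cm (m : ℕ) : ℝ :=
  (∫ u in (0:ℝ)..Real.pi, Real.sin u ^ (2 * m - 1))⁻¹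

/-- `M_m(ω) = 1 - c_m ∫_0^ω sin^{2m-1} u du`, i.e. `|H_m(ω)|²` for the Daubechies filter. -/
noncomputable def Mm (m : ℕ) (ω : ℝ) : ℝ :=
  1 - cm m * ∫ u in (0:ℝ)..ω, Real.sin u ^ (2 * m - 1)

/-- `F_m(ω) = (1/(2π)) M_m(ω/2 + π) ∏_{l=1}^∞ M_m(2^{-l-1} ω) = |(ψ_m^D)^∧(ω)|²`. -/
noncomputable def Fm (m : ℕ) (ω : ℝ) : ℝ :=
  (1 / (2 * Real.pi)) * Mm m (ω / 2 + Real.pi) *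
    ∏' l : ℕ, Mm m (2 ^ (-((l : ℝ) + 2)) * ω)

/-!
Every factor of the infinite product defining `F_m(ω)` lies in `[0, 1]` when `|ω| ≤ 4π`, because
`∫_0^y sin^{2m-1}` is even in `y` and increasing on `[0, π]`. The remaining factor `M_m(ω/2 + π)`
vanishes to order `2m` at `ω = 0`, since `|sin u| ≤ |u - π|`; together with `c_m ≤ 2^m`, which
follows from Wallis' product, this gives `|F_m(ω)| ≤ (ω²/2)^m`. For `m > k` and `|ω| < ε < 1` the
integrand is therefore at most `2^{-pm/2}`, and the integral tends to `0` geometrically.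
-/

section SinPow

open Real intervalIntegral Set

lemma intervalIntegrable_sin_pow (n : ℕ) (a b : ℝ) :
    IntervalIntegrable (fun u => sin u ^ n) volume a b :=
  (continuous_sin.pow n).intervalIntegrable a b

lemma integral_sin_pow_odd_neg {n : ℕ} (hn : Odd n) (y : ℝ) :
    ∫ u in (0:ℝ)..-y, sin u ^ n = ∫ u in (0:ℝ)..y, sin u ^ n := by
  have h := integral_comp_neg (a := 0) (b := y) fun u => sin u ^ n
  simp only [sin_neg, hn.neg_pow, intervalIntegral.integral_neg, neg_zero] at h
  rw [integral_symm, ← h, neg_neg]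

lemma integral_sin_pow_mem_Icc_of_mem_Icc (n : ℕ) {y : ℝ} (hy : y ∈ Icc 0 π) :
    ∫ u in (0:ℝ)..y, sin u ^ n ∈ Icc 0 (∫ u in (0:ℝ)..π, sin u ^ n) := by
  have hnonneg {a b : ℝ} (ha : 0 ≤ a) (hab : a ≤ b) (hb : b ≤ π) :
      0 ≤ ∫ u in a..b, sin u ^ n :=
    integral_nonneg hab fun u hu =>
      pow_nonneg (sin_nonneg_of_nonneg_of_le_pi (ha.trans hu.1) (hu.2.trans hb)) n
  refine ⟨hnonneg le_rfl hy.1 hy.2, sub_nonneg.1 ?_⟩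
  rw [integral_interval_sub_left (intervalIntegrable_sin_pow n _ _)
    (intervalIntegrable_sin_pow n _ _)]
  exact hnonneg hy.1 hy.2 le_rfl

lemma integral_sin_pow_odd_mem_Icc {n : ℕ} (hn : Odd n) {y : ℝ} (hy : |y| ≤ π) :
    ∫ u in (0:ℝ)..y, sin u ^ n ∈ Icc 0 (∫ u in (0:ℝ)..π, sin u ^ n) := by
  rcases le_total 0 y with h | h
  · exact integral_sin_pow_mem_Icc_of_mem_Icc n ⟨h, (le_abs_self y).trans hy⟩
  · have := integral_sin_pow_mem_Icc_of_mem_Icc n ⟨neg_nonneg.2 h, (neg_le_abs y).trans hy⟩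
    rwa [integral_sin_pow_odd_neg hn] at this

lemma abs_integral_sin_pow_le (n : ℕ) (x : ℝ) :
    |∫ u in (x + π)..π, sin u ^ n| ≤ |x| ^ (n + 1) := by
  have hsin : ∀ u ∈ uIoc (x + π) π, ‖sin u ^ n‖ ≤ |x| ^ n := by
    intro u hu
    have hdist : |u - π| ≤ |x| := by
      rw [mem_uIoc] at hu
      rcases hu with hu | hu <;> rw [abs_le] at * <;> constructor <;>
        linarith [neg_abs_le x, le_abs_self x]
    rw [norm_pow, norm_eq_abs]
    refine pow_le_pow_left₀ (abs_nonneg _) ?_ n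
    calc |sin u| = |sin (u - π)| := by rw [sin_sub_pi, abs_neg]
      _ ≤ |x| := abs_sin_le_abs.trans hdist
  calc |∫ u in (x + π)..π, sin u ^ n| ≤ |x| ^ n * |π - (x + π)| :=
        norm_integral_le_of_norm_le_const hsin
    _ = |x| ^ (n + 1) := by rw [show π - (x + π) = -x by ring, abs_neg, pow_succ]

lemma two_mul_inv_two_pow_le_integral_sin_pow_odd (n : ℕ) :
    2 * (2 ^ n)⁻¹ ≤ ∫ u in (0:ℝ)..π, sin u ^ (2 * n + 1) := by
  rw [integral_sin_pow_odd]
  calc 2 * (2 ^ n)⁻¹ = 2 * ∏ _i ∈ Finset.range n, (2:ℝ)⁻¹ := by simp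
    _ ≤ 2 * ∏ i ∈ Finset.range n, (2 * (i : ℝ) + 2) / (2 * i + 3) := by
      gcongr with i
      rw [le_div_iff₀ (by positivity)]
      linarith [(i.cast_nonneg : (0:ℝ) ≤ i)]

end SinPow

section Daubechies

open Real intervalIntegral Set

lemma cm_mul_integral_sin_pow (m : ℕ) :
    cm m * ∫ u in (0:ℝ)..π, sin u ^ (2 * m - 1) = 1 :=
  inv_mul_cancel₀ (integral_sin_pow_pos _).ne'

lemma cm_pos (m : ℕ) : 0 < cm m := inv_pos.2 (integral_sin_pow_pos _)

lemma cm_le_two_pow {m : ℕ} (hm : m ≠ 0) : cm m ≤ 2 ^ m := by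
  obtain ⟨n, rfl⟩ := Nat.exists_eq_succ_of_ne_zero hm
  rw [cm, show 2 * (n + 1) - 1 = 2 * n + 1 by omega]
  calc (∫ u in (0:ℝ)..π, sin u ^ (2 * n + 1))⁻¹ ≤ (2 * (2 ^ n)⁻¹)⁻¹ :=
        inv_anti₀ (by positivity) (two_mul_inv_two_pow_le_integral_sin_pow_odd n)
    _ ≤ 2 ^ (n + 1) := by
        rw [mul_inv, inv_inv, pow_succ]
        linarith [pow_pos (two_pos (α := ℝ)) n]

lemma Mm_eq_cm_mul_integral (m : ℕ) (y : ℝ) :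
    Mm m y = cm m * ∫ u in y..π, sin u ^ (2 * m - 1) := by
  rw [← integral_interval_sub_left (intervalIntegrable_sin_pow _ 0 π)
    (intervalIntegrable_sin_pow _ 0 y), mul_sub, cm_mul_integral_sin_pow, Mm]

lemma Mm_mem_Icc {m : ℕ} (hm : m ≠ 0) {y : ℝ} (hy : |y| ≤ π) : Mm m y ∈ Icc 0 1 := by
  obtain ⟨hI0, hIπ⟩ := integral_sin_pow_odd_mem_Icc (n := 2 * m - 1) ⟨m - 1, by omega⟩ hy
  have hc := cm_pos m
  have := cm_mul_integral_sin_pow m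
  constructor <;> simp only [Mm] <;> nlinarith

lemma abs_Mm_add_pi_le {m : ℕ} (hm : m ≠ 0) (x : ℝ) :
    |Mm m (x + π)| ≤ cm m * |x| ^ (2 * m) := by
  rw [Mm_eq_cm_mul_integral, abs_mul, abs_of_pos (cm_pos m),
    show 2 * m = 2 * m - 1 + 1 by omega]
  exact mul_le_mul_of_nonneg_left (abs_integral_sin_pow_le _ x) (cm_pos m).le

lemma tprod_mem_Icc_zero_one {ι : Type*} {f : ι → ℝ} (hf : ∀ i, f i ∈ Icc 0 1) :
    ∏' i, f i ∈ Icc 0 1 := by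
  refine ⟨tprod_nonneg fun i => (hf i).1, ?_⟩
  by_cases hmul : Multipliable f
  · exact le_of_tendsto' hmul.hasProd fun s =>
      Finset.prod_le_one (fun i _ => (hf i).1) fun i _ => (hf i).2
  · rw [tprod_eq_one_of_not_multipliable hmul]

lemma abs_Fm_le {m : ℕ} (hm : m ≠ 0) {ω : ℝ} (hω : |ω| ≤ 4 * π) :
    |Fm m ω| ≤ (ω ^ 2 / 2) ^ m := by
  have hfactor (l : ℕ) : Mm m (2 ^ (-((l : ℝ) + 2)) * ω) ∈ Icc 0 1 := by
    refine Mm_mem_Icc hm ?_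
    have h2 : (2:ℝ) ^ (-((l : ℝ) + 2)) ≤ 2 ^ (-2 : ℝ) :=
      rpow_le_rpow_of_exponent_le one_le_two (by linarith [l.cast_nonneg (α := ℝ)])
    rw [abs_mul, abs_of_pos (by positivity)]
    calc (2:ℝ) ^ (-((l : ℝ) + 2)) * |ω| ≤ 2 ^ (-2 : ℝ) * (4 * π) := by gcongr
      _ = π := by rw [show (2:ℝ) ^ (-2 : ℝ) = 1 / 4 by norm_num]; ring
  obtain ⟨hP0, hP1⟩ := tprod_mem_Icc_zero_one hfactor
  have hπ : 1 / (2 * π) ≤ 1 := by rw [div_le_one (by positivity)]; linarith [pi_gt_three]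
  calc |Fm m ω| ≤ 1 * (cm m * |ω / 2| ^ (2 * m)) * 1 := by
        rw [Fm, abs_mul, abs_mul, abs_of_pos (by positivity), abs_of_nonneg hP0]
        exact mul_le_mul (mul_le_mul hπ (abs_Mm_add_pi_le hm _) (abs_nonneg _) zero_le_one)
          hP1 hP0 (by have := cm_pos m; positivity)
    _ ≤ 2 ^ m * (ω ^ 2 / 4) ^ m := by
        rw [one_mul, mul_one, pow_mul, sq_abs, div_pow]
        gcongr
        · exact cm_le_two_pow hm
        · norm_num
    _ = (ω ^ 2 / 2) ^ m := by rw [← mul_pow]; ring_nf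

end Daubechies

open Real in
lemma abs_rpow_neg_mul_rpow_le {p : ℝ} (hp : 0 < p) {k m : ℕ} (hkm : k < m) {ω F : ℝ}
    (hω : |ω| ≤ 1) (hF : |F| ≤ (ω ^ 2 / 2) ^ m) :
    |(|ω| ^ (-(p * k)) * F ^ (p / 2))| ≤ ((2:ℝ) ^ (-(p / 2))) ^ m := by
  have ht := abs_nonneg ω
  have hsplit : ((ω ^ 2 / 2) ^ m) ^ (p / 2) = |ω| ^ (p * m) * ((2:ℝ) ^ (-(p / 2))) ^ m := by
    rw [← rpow_pow_comm (by positivity), ← sq_abs, div_eq_mul_inv, mul_rpow (by positivity)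
      (by norm_num), ← rpow_natCast_mul ht, inv_rpow zero_le_two, ← rpow_neg zero_le_two,
      mul_pow, rpow_mul_natCast ht]
    ring_nf
  have hexp : 0 < -(p * k) + p * m := by
    have : (k : ℝ) < m := by exact_mod_cast hkm
    nlinarith
  calc |(|ω| ^ (-(p * k)) * F ^ (p / 2))| ≤ |ω| ^ (-(p * k)) * ((ω ^ 2 / 2) ^ m) ^ (p / 2) := by
        rw [abs_mul, abs_of_nonneg (rpow_nonneg ht _)]
        gcongr
        exact (abs_rpow_le_abs_rpow _ _).trans (rpow_le_rpow (abs_nonneg _) hF (by positivity))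
    _ = |ω| ^ (-(p * k) + p * m) * ((2:ℝ) ^ (-(p / 2))) ^ m := by
        rw [hsplit, rpow_add' ht hexp.ne', mul_assoc]
    _ ≤ ((2:ℝ) ^ (-(p / 2))) ^ m := by
        nth_rw 2 [← one_mul (((2:ℝ) ^ (-(p / 2))) ^ m)]
        gcongr
        exact rpow_le_one ht hω hexp.le

theorem stmt3_general (k : ℕ) (p : ℝ) (hp : 1 < p) (ε : ℝ) (hε1 : ε < 1) :
    Tendsto (fun m : ℕ =>
        ∫ ω in {ω : ℝ | |ω| < ε}, |ω| ^ (-(p * (k : ℝ))) * Fm m ω ^ (p / 2))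
      atTop (𝓝 0) := by
  have hr : (2:ℝ) ^ (-(p / 2)) < 1 := Real.rpow_lt_one_of_one_lt_of_neg one_lt_two (by linarith)
  have hvol : volume {ω : ℝ | |ω| < ε} < ⊤ := by
    simpa [Metric.ball, Real.dist_eq] using measure_ball_lt_top (x := (0:ℝ)) (r := ε)
  have hlim := (tendsto_pow_atTop_nhds_zero_of_lt_one (by positivity) hr).mul_const
    (volume.real {ω : ℝ | |ω| < ε})
  rw [zero_mul] at hlim
  refine squeeze_zero_norm' ?_ hlim
  filter_upwards [eventually_gt_atTop k] with m hkm
  refine norm_setIntegral_le_of_norm_le_const hvol fun ω hω => ?_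
  have hω1 : |ω| ≤ 1 := (le_of_lt hω).trans hε1.le
  exact abs_rpow_neg_mul_rpow_le (by linarith) hkm hω1
    (abs_Fm_le (by omega) (by linarith [Real.pi_gt_three]))

theorem stmt3 (k : ℕ) (p : ℝ) (hp : 1 < p) (ε : ℝ) (hε0 : 0 < ε) (hε1 : ε < 1) :
    Tendsto (fun m : ℕ =>
        ∫ ω in {ω : ℝ | |ω| < ε}, |ω| ^ (-(p * (k : ℝ))) * Fm m ω ^ (p / 2))
      atTop (𝓝 0) :=
  stmt3_general k p hp ε hε1
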